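/- arXiv:2205.03253 — 2 statements merged into one kernel-verified Lean document; each statement's English description precedes it below -/
import Mathlib

section
/- Let K be a finite simplicial complex, f an injective filtration function on K, and σ₁, …, σ_k distinct n-dimensional simplices of K with f(σ₁) < f(σ₂) < … < f(σ_k) < f(σ₁) + 2ε for some ε > 0. Then for every permutation π of {1, …, k} there exists an injective filtration function g on K such that ‖f − g‖_∞ ≤ ε and g(σ_{π(1)}) < g(σ_{π(2)}) < … < g(σ_{π(k)}). -/
open scoped BigOperators

/-- A finite simplicial complex on vertex type `V`: a finite family of nonempty
finite vertex sets closed under passing to nonempty subsets. -/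
structure SComplex (V : Type*) where
  faces : Finset (Finset V)
  nonempty_of_mem : ∀ s ∈ faces, s.Nonempty
  down_closed : ∀ s ∈ faces, ∀ t ⊆ s, t.Nonempty → t ∈ faces

variable {V : Type*} [LinearOrder V]

/-- `f` is an injective filtration function on `K`: face-monotone and injective on faces. -/
def IsFiltrationFn (K : SComplex V) (f : Finset V → ℝ) : Prop :=
  (∀ s ∈ K.faces, ∀ t ∈ K.faces, s ⊆ t → f s ≤ f t) ∧
  (∀ s ∈ K.faces, ∀ t ∈ K.faces, f s = f t → s = t)

/-- The sup-distance between `f` and `g` over the faces of `K` is at most `ε`. -/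
def DistLE (K : SComplex V) (f g : Finset V → ℝ) (ε : ℝ) : Prop :=
  ∀ s ∈ K.faces, |f s - g s| ≤ ε

/-- The sublevel subcomplex `K^f_r = f⁻¹((-∞, r])`. -/
noncomputable def sublevel (K : SComplex V) (f : Finset V → ℝ) (r : ℝ) : Finset (Finset V) :=
  K.faces.filter (fun s => f s ≤ r)

variable (𝔽 : Type*) [Field 𝔽]

/-- The simplicial boundary operator on chains (finitely supported functions on
simplices), with signs determined by the linear order on vertices. -/
noncomputable def bdry : (Finset V →₀ 𝔽) →ₗ[𝔽] (Finset V →₀ 𝔽) :=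
  Finsupp.lsum 𝔽 (fun s => ∑ x ∈ s,
    ((-1 : 𝔽) ^ (s.filter (fun y => y < x)).card) • Finsupp.lsingle (s.erase x))

/-- The submodule of `n`-chains supported on simplices of `L` (of cardinality `n+1`). -/
def chainsIn (L : Finset (Finset V)) (n : ℕ) : Submodule 𝔽 (Finset V →₀ 𝔽) where
  carrier := {c | ∀ s ∈ c.support, s ∈ L ∧ s.card = n + 1}
  add_mem' := by
    intro c d hc hd s hs
    rcases Finset.mem_union.mp (Finsupp.support_add hs) with h | h
    · exact hc s h
    · exact hd s h
  zero_mem' := by intro s hs; simp at hs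
  smul_mem' := by
    intro a c hc s hs
    exact hc s (Finsupp.support_smul hs)

/-- `n`-cycles supported in `L`. -/
noncomputable def cyclesIn (L : Finset (Finset V)) (n : ℕ) : Submodule 𝔽 (Finset V →₀ 𝔽) :=
  chainsIn 𝔽 L n ⊓ LinearMap.ker (bdry 𝔽)

/-- `n`-boundaries of `(n+1)`-chains supported in `L`. -/
noncomputable def boundariesIn (L : Finset (Finset V)) (n : ℕ) : Submodule 𝔽 (Finset V →₀ 𝔽) :=
  (chainsIn 𝔽 L (n + 1)).map (bdry 𝔽)

/-- `α` is an `n`-cycle in the subcomplex `L`. -/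
def IsCycleIn (L : Finset (Finset V)) (n : ℕ) (α : Finset V →₀ 𝔽) : Prop :=
  α ∈ cyclesIn 𝔽 L n

/-- The class of `α` is trivial in `H_n(L)`. -/
def TrivialIn (L : Finset (Finset V)) (n : ℕ) (α : Finset V →₀ 𝔽) : Prop :=
  α ∈ boundariesIn 𝔽 L n

/-- `α` and `β` are homologous in `L`. -/
def HomologousIn (L : Finset (Finset V)) (n : ℕ) (α β : Finset V →₀ 𝔽) : Prop :=
  α - β ∈ boundariesIn 𝔽 L n

/-- The homology class `[α] ∈ H_n(K^f_a)` is born at `a`: it is a nontrivial cycle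
at level `a` and does not come from any strictly earlier level. -/
def BornAt (K : SComplex V) (f : Finset V → ℝ) (n : ℕ) (α : Finset V →₀ 𝔽) (a : ℝ) : Prop :=
  IsCycleIn 𝔽 (sublevel K f a) n α ∧ ¬ TrivialIn 𝔽 (sublevel K f a) n α ∧
  ∀ q < a, ¬ ∃ β, IsCycleIn 𝔽 (sublevel K f q) n β ∧ HomologousIn 𝔽 (sublevel K f a) n α β

/-- The class `[α]` terminates at level `b` in the filtration `K^f`. -/
def TerminatesAt (K : SComplex V) (f : Finset V → ℝ) (n : ℕ) (α : Finset V →₀ 𝔽) (b : ℝ) : Prop :=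
  TrivialIn 𝔽 (sublevel K f b) n α ∧ ∀ q < b, ¬ TrivialIn 𝔽 (sublevel K f q) n α

/-- `Δ` is the terminal simplex of `[α]` in the filtration `K^f`: the simplex added
at the level where `[α]` terminates. -/
def TerminalSimplex (K : SComplex V) (f : Finset V → ℝ) (n : ℕ) (α : Finset V →₀ 𝔽)
    (Δ : Finset V) : Prop :=
  Δ ∈ K.faces ∧ TerminatesAt 𝔽 K f n α (f Δ)

/-- `Σ_ε`: the set of terminal simplices of `[α]` over all injective filtration
functions within sup-distance `ε` of `f`. -/
def TermSet (K : SComplex V) (f : Finset V → ℝ) (n : ℕ) (α : Finset V →₀ 𝔽) (ε : ℝ) :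
    Set (Finset V) :=
  {Δ | ∃ g, IsFiltrationFn K g ∧ DistLE K f g ε ∧ TerminalSimplex 𝔽 K g n α Δ}

/-- `τ` gives birth to a class in `H_n(K^f)`. -/
def IsBirthSimplex (K : SComplex V) (f : Finset V → ℝ) (n : ℕ) (τ : Finset V) : Prop :=
  τ ∈ K.faces ∧ ∃ β : Finset V →₀ 𝔽, BornAt 𝔽 K f n β (f τ)

/-- `τ` terminates a class in `H_n(K^f)`. -/
def IsTerminalSimplexOf (K : SComplex V) (f : Finset V → ℝ) (n : ℕ) (τ : Finset V) : Prop :=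
  τ ∈ K.faces ∧ ∃ (β : Finset V →₀ 𝔽) (a : ℝ),
    BornAt 𝔽 K f n β a ∧ TerminatesAt 𝔽 K f n β (f τ)

/-- The linear order on the faces of `K` induced by `g`. -/
def inducedRel (K : SComplex V) (g : Finset V → ℝ) :
    {s // s ∈ K.faces} → {s // s ∈ K.faces} → Prop :=
  fun s t => g s.1 < g t.1

/-- `Π_ε`: the set of orders on the faces of `K` induced by injective filtration
functions within sup-distance `ε` of `f`. -/
def OrderSet (K : SComplex V) (f : Finset V → ℝ) (ε : ℝ) :
    Set ({s // s ∈ K.faces} → {s // s ∈ K.faces} → Prop) :=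
  {r | ∃ g, IsFiltrationFn K g ∧ DistLE K f g ε ∧ r = inducedRel K g}

/-- `f` is generic: equal absolute differences of `f`-values occur only for the
same unordered pair of faces. -/
def Generic (K : SComplex V) (f : Finset V → ℝ) : Prop :=
  ∀ s ∈ K.faces, ∀ t ∈ K.faces, ∀ s' ∈ K.faces, ∀ t' ∈ K.faces,
    s ≠ t → s' ≠ t' → |f s - f t| = |f s' - f t'| →
    (s = s' ∧ t = t') ∨ (s = t' ∧ t = s')

/-- The rank of the map `H_n(K^f_p) → H_n(K^f_q)`, realized as the dimension of
the image of the cycles at level `p` in the quotient by boundaries at level `q`. -/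
noncomputable def persRank (K : SComplex V) (f : Finset V → ℝ) (n : ℕ) (p q : ℝ) : ℕ :=
  Module.finrank 𝔽
    ↥(Submodule.map (boundariesIn 𝔽 (sublevel K f q) n).mkQ (cyclesIn 𝔽 (sublevel K f p) n))

/-- `[a, b)` is a bar of the `n`-th persistence module of `K^f`: the standard
inclusion–exclusion of ranks equals `1` for all sufficiently small offsets. -/
def IsBar (K : SComplex V) (f : Finset V → ℝ) (n : ℕ) (a b : ℝ) : Prop :=
  a < b ∧ ∃ δ > 0, ∀ ε : ℝ, 0 < ε → ε < δ →
    persRank 𝔽 K f n a (b - ε) + persRank 𝔽 K f n (a - ε) b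
      = persRank 𝔽 K f n a b + persRank 𝔽 K f n (a - ε) (b - ε) + 1

/-!
All `σ i` have `f`-values in `[lo, hi]` with `hi - lo < 2ε`, so every value in the window
`[hi - ε, lo + ε]` is within `ε` of each `f (σ i)`, and there the `σ i` can be given any
prescribed order. Monotonicity is restored by pushing faces of dimension `≤ n` whose value lies
in `(hi - ε, hi]` down to `hi - ε`, and faces of dimension `> n` whose value lies in
`[lo, lo + ε)` up to `lo + ε`; this moves nothing by more than `ε`. The resulting `g` is monotone
but perhaps not injective. Finally `g + t (f - g)` is monotone and within `ε` of `f` for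
`t ∈ [0, 1]`, injective for all but finitely many `t` because `f` is, and keeps every strict
inequality of `g` for small `t`.
-/

open Filter Topology

noncomputable def collapseDown (a ε x : ℝ) : ℝ := if x ≤ a + ε then min x a else x

noncomputable def collapseUp (b ε x : ℝ) : ℝ := if b - ε ≤ x then max x b else x

lemma monotone_collapseDown (a ε : ℝ) : Monotone (collapseDown a ε) := by
  intro x y hxy
  unfold collapseDown
  split_ifs <;> grind

lemma monotone_collapseUp (b ε : ℝ) : Monotone (collapseUp b ε) := by
  intro x y hxy
  unfold collapseUp
  split_ifs <;> grind

lemma collapseDown_le (a ε x : ℝ) : collapseDown a ε x ≤ x := by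
  unfold collapseDown; split_ifs <;> grind

lemma le_collapseUp (b ε x : ℝ) : x ≤ collapseUp b ε x := by
  unfold collapseUp; split_ifs <;> grind

lemma collapseDown_le_of_le {a ε x : ℝ} (hx : x ≤ a + ε) : collapseDown a ε x ≤ a := by
  unfold collapseDown; grind

lemma le_collapseUp_of_le {b ε x : ℝ} (hx : b - ε ≤ x) : b ≤ collapseUp b ε x := by
  unfold collapseUp; grind

lemma abs_sub_collapseDown_le (a : ℝ) {ε : ℝ} (hε : 0 ≤ ε) (x : ℝ) :
    |x - collapseDown a ε x| ≤ ε := by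
  unfold collapseDown; rw [abs_le]; split_ifs <;> grind

lemma abs_sub_collapseUp_le (b : ℝ) {ε : ℝ} (hε : 0 ≤ ε) (x : ℝ) :
    |x - collapseUp b ε x| ≤ ε := by
  unfold collapseUp; rw [abs_le]; split_ifs <;> grind

lemma exists_monotoneOn_comp_eq {V : Type*} (K : SComplex V) {f : Finset V → ℝ}
    (hf : MonotoneOn f K.faces) {ι : Type*} {σ : ι → Finset V} (hσ : Function.Injective σ)
    {n : ℕ} (hdim : ∀ i, (σ i).card = n + 1) {a b ε : ℝ} (hε : 0 ≤ ε) {v : ι → ℝ}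
    (hv : ∀ i, v i ∈ Set.Icc a b) (hfσ : ∀ i, f (σ i) ∈ Set.Icc (b - ε) (a + ε)) :
    ∃ g, MonotoneOn g K.faces ∧ DistLE K f g ε ∧ ∀ i, g (σ i) = v i := by
  classical
  set g := Function.extend σ v fun s =>
    if s.card ≤ n + 1 then collapseDown a ε (f s) else collapseUp b ε (f s) with hg_def
  have hgσ : ∀ i, g (σ i) = v i := hσ.extend_apply _ _
  have hg_low : ∀ s, (¬∃ i, σ i = s) → s.card ≤ n + 1 → g s = collapseDown a ε (f s) :=
    fun s hs hcard => by rw [hg_def, Function.extend_apply' _ _ _ hs, if_pos hcard]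
  have hg_high : ∀ s, (¬∃ i, σ i = s) → n + 1 < s.card → g s = collapseUp b ε (f s) :=
    fun s hs hcard => by rw [hg_def, Function.extend_apply' _ _ _ hs, if_neg (by omega)]
  refine ⟨g, ?_, ?_, hgσ⟩
  · intro s hs t ht (hst : s ⊆ t)
    have hcard := Finset.card_le_card hst
    have hfst := hf hs ht hst
    rcases em (∃ i, σ i = s) with ⟨i, rfl⟩ | hsσ <;> rcases em (∃ j, σ j = t) with ⟨j, rfl⟩ | htσ
    · obtain rfl := hσ (Finset.eq_of_subset_of_card_le hst (by rw [hdim, hdim]))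
      exact le_rfl
    · have ht_card : n + 1 < t.card := by
        rw [hdim] at hcard
        refine lt_of_le_of_ne hcard fun h => htσ ⟨i, Finset.eq_of_subset_of_card_le hst ?_⟩
        rw [hdim, h]
      rw [hgσ, hg_high t htσ ht_card]
      exact (hv i).2.trans (le_collapseUp_of_le ((hfσ i).1.trans hfst))
    · rw [hgσ, hg_low s hsσ (hdim j ▸ hcard)]
      exact (collapseDown_le_of_le (hfst.trans (hfσ j).2)).trans (hv j).1
    · by_cases hs_card : s.card ≤ n + 1 <;> by_cases ht_card : t.card ≤ n + 1
      · rw [hg_low s hsσ hs_card, hg_low t htσ ht_card]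
        exact monotone_collapseDown a ε hfst
      · rw [hg_low s hsσ hs_card, hg_high t htσ (by omega)]
        exact ((collapseDown_le a ε _).trans hfst).trans (le_collapseUp b ε _)
      · omega
      · rw [hg_high s hsσ (by omega), hg_high t htσ (by omega)]
        exact monotone_collapseUp b ε hfst
  · intro s _
    rcases em (∃ i, σ i = s) with ⟨i, rfl⟩ | hsσ
    · obtain ⟨hva, hvb⟩ := hv i
      obtain ⟨hfb, hfa⟩ := hfσ i
      rw [hgσ, abs_le]
      constructor <;> linarith
    · by_cases hs_card : s.card ≤ n + 1
      · rw [hg_low s hsσ hs_card]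
        exact abs_sub_collapseDown_le a hε _
      · rw [hg_high s hsσ (by omega)]
        exact abs_sub_collapseUp_le b hε _

lemma eventually_cofinite_injOn_add_smul_sub {α : Type*} {S : Set α} (hS : S.Finite)
    {f g : α → ℝ} (hf : Set.InjOn f S) :
    ∀ᶠ t : ℝ in cofinite, Set.InjOn (g + t • (f - g)) S := by
  -- `t ↦ x + t (y - x)` takes the value `y ≠ 0` at `t = 1`, so it vanishes at most once.
  have roots_subsingleton : ∀ x y : ℝ, y ≠ 0 → {t : ℝ | x + t * (y - x) = 0}.Subsingleton := by
    intro x y hy t₁ h₁ t₂ h₂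
    simp only [Set.mem_ofPred_eq] at h₁ h₂
    rcases mul_eq_zero.1 (by linarith : (t₁ - t₂) * (y - x) = 0) with h | h
    · linarith
    · have hyx : y = x := by linarith
      rw [hyx, sub_self, mul_zero, add_zero] at h₁
      exact absurd (hyx.trans h₁) hy
  rw [eventually_cofinite]
  refine (hS.offDiag.biUnion fun p hp =>
    (roots_subsingleton (g p.1 - g p.2) (f p.1 - f p.2)
      (sub_ne_zero.2 fun h => hp.2.2 (hf hp.1 hp.2.1 h))).finite).subset ?_
  intro t ht
  simp only [Set.InjOn, not_forall, Set.mem_ofPred_eq] at ht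
  obtain ⟨a, ha, b, hb, hab, hne⟩ := ht
  simp only [Pi.add_apply, Pi.smul_apply, Pi.sub_apply, smul_eq_mul] at hab
  exact Set.mem_biUnion (x := (a, b)) ⟨ha, hb, hne⟩ (by simp only [Set.mem_ofPred_eq]; linarith)

lemma MonotoneOn.add_smul_sub {α : Type*} [Preorder α] {S : Set α} {f g : α → ℝ}
    (hf : MonotoneOn f S) (hg : MonotoneOn g S) {t : ℝ} (ht₀ : 0 ≤ t) (ht₁ : t ≤ 1) :
    MonotoneOn (g + t • (f - g)) S := by
  intro a ha b hb hab
  have hfab := hf ha hb hab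
  have hgab := hg ha hb hab
  simp only [Pi.add_apply, Pi.smul_apply, Pi.sub_apply, smul_eq_mul]
  nlinarith

lemma abs_sub_add_mul_sub_le {x y t : ℝ} (ht₀ : 0 ≤ t) (ht₁ : t ≤ 1) :
    |x - (y + t * (x - y))| ≤ |x - y| := by
  rw [show x - (y + t * (x - y)) = (1 - t) * (x - y) by ring, abs_mul, abs_of_nonneg (by linarith)]
  nlinarith [abs_nonneg (x - y)]

lemma exists_isFiltrationFn_refining {V : Type*} (K : SComplex V) {f g : Finset V → ℝ}
    (hf : IsFiltrationFn K f) (hg : MonotoneOn g K.faces) {ε : ℝ} (hfg : DistLE K f g ε) :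
    ∃ h, IsFiltrationFn K h ∧ DistLE K f h ε ∧
      ∀ s ∈ K.faces, ∀ u ∈ K.faces, g s < g u → h s < h u := by
  have h_inj : ∀ᶠ t in 𝓝[>] (0 : ℝ), Set.InjOn (g + t • (f - g)) K.faces :=
    nhdsGT_le_nhdsNE 0 <| nhdsNE_le_cofinite 0 <|
      eventually_cofinite_injOn_add_smul_sub (g := g) K.faces.finite_toSet hf.2
  have h_lt : ∀ᶠ t in 𝓝 (0 : ℝ), ∀ s ∈ K.faces, ∀ u ∈ K.faces,
      g s < g u → (g + t • (f - g)) s < (g + t • (f - g)) u := by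
    simp only [eventually_all_finset, eventually_imp_distrib_left]
    intro s _ u _ hsu
    exact ContinuousAt.eventually_lt (by fun_prop) (by fun_prop) (by simpa using hsu)
  have h_unit : ∀ᶠ t in 𝓝[>] (0 : ℝ), t ∈ Set.Ioc 0 1 := Ioc_mem_nhdsGT zero_lt_one
  obtain ⟨t, ht_inj, ⟨ht₀, ht₁⟩, ht_lt⟩ :=
    (h_inj.and (h_unit.and (nhdsWithin_le_nhds h_lt))).exists
  refine ⟨_, ⟨MonotoneOn.add_smul_sub hf.1 hg ht₀.le ht₁, ht_inj⟩, fun s hs => ?_, ht_lt⟩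
  exact (abs_sub_add_mul_sub_le ht₀.le ht₁).trans (hfg s hs)

/-- Corollary `switchmany`: any permutation of `n`-simplices
whose `f`-values lie within a window of length `< 2ε` can be realized by an
`ε`-perturbation. -/
theorem stmt1 {V : Type*} [LinearOrder V] (K : SComplex V) (f : Finset V → ℝ)
    (hf : IsFiltrationFn K f) (n : ℕ) (k : ℕ) (hk : 0 < k) (σ : Fin k → Finset V)
    (hmem : ∀ i, σ i ∈ K.faces) (hinj : Function.Injective σ)
    (hdim : ∀ i, (σ i).card = n + 1)
    (ε : ℝ) (hε : 0 < ε)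
    (hmono : ∀ i j : Fin k, i < j → f (σ i) < f (σ j))
    (hspan : ∀ i : Fin k, f (σ i) < f (σ ⟨0, hk⟩) + 2 * ε)
    (π : Equiv.Perm (Fin k)) :
    ∃ g : Finset V → ℝ, IsFiltrationFn K g ∧ DistLE K f g ε ∧
      ∀ i j : Fin k, i < j → g (σ (π i)) < g (σ (π j)) := by
  have hfσ : Monotone (f ∘ σ) := StrictMono.monotone fun i j => hmono i j
  set lo := f (σ ⟨0, hk⟩)
  set hi := f (σ ⟨k - 1, by omega⟩)
  have hσ_mem : ∀ i, f (σ i) ∈ Set.Icc lo hi := fun i =>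
    ⟨hfσ (Fin.mk_le_of_le_val (Nat.zero_le _)), hfσ (Fin.le_def.2 (Nat.le_sub_one_of_lt i.isLt))⟩
  set v : Fin k → ℝ := fun j => hi - ε + (lo + ε - (hi - ε)) * ((π.symm j : ℕ) / k)
  have hwidth : 0 < lo + ε - (hi - ε) := by linarith [hspan ⟨k - 1, by omega⟩]
  have hv : ∀ j, v j ∈ Set.Icc (hi - ε) (lo + ε) := fun j => by
    have h₀ : (0 : ℝ) ≤ (π.symm j : ℕ) / k := by positivity
    have h₁ : ((π.symm j : ℕ) : ℝ) / k ≤ 1 :=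
      div_le_one_of_le₀ (by exact_mod_cast (π.symm j).isLt.le) (Nat.cast_nonneg k)
    constructor <;> nlinarith
  have hv_lt : ∀ i j, i < j → v (π i) < v (π j) := fun i j hij => by
    simp only [v, Equiv.symm_apply_apply]
    gcongr
    exact_mod_cast hij
  obtain ⟨g, hg, hfg, hgσ⟩ := exists_monotoneOn_comp_eq K hf.1 hinj hdim hε.le hv
    fun i => ⟨by linarith [(hσ_mem i).1], by linarith [(hσ_mem i).2]⟩
  obtain ⟨h, hh, hfh, h_refines⟩ := exists_isFiltrationFn_refining K hf hg hfg
  refine ⟨h, hh, hfh, fun i j hij => h_refines _ (hmem _) _ (hmem _) ?_⟩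
  rw [hgσ, hgσ]
  exact hv_lt i j hij
end

section
/- Let K be a finite simplicial complex with an injective filtration function f, let [α] be an n-dimensional homology class born at a and terminating at b, and for 0 < ε < (b−a)/2 let Σ_ε be the set of terminal simplices of [α] over injective filtration functions within sup-distance ε of f. Then for every t ∈ (0, (b−a)/2) there exists δ > 0 such that Σ_ε = Σ_t for all ε ∈ (t − δ, t]; i.e., ε ↦ Σ_ε is constant on a half-open interval ending at each t. -/
open scoped BigOperators

variable {V : Type*} [LinearOrder V]

variable (𝔽 : Type*) [Field 𝔽]

/-! Moving a perturbed filtration `g` a little way back towards `f` does not change the order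
in which `g` adds the faces of `K`, and a terminal simplex depends only on that order. So every
`Δ ∈ Σ_t` already lies in `Σ_ε` for some `ε < t`; as `Σ_t` is a finite set of faces and `ε ↦ Σ_ε`
is monotone, `Σ_ε = Σ_t` for all `ε` close enough to `t` from below. -/

open Filter Topology

section InducedOrder

variable {V : Type*} {K : SComplex V} {g g' : Finset V → ℝ}

lemma lt_iff_lt_of_inducedRel_eq (hord : inducedRel K g = inducedRel K g') {s u : Finset V}
    (hs : s ∈ K.faces) (hu : u ∈ K.faces) : g s < g u ↔ g' s < g' u :=
  Iff.of_eq (congrFun (congrFun hord ⟨s, hs⟩) ⟨u, hu⟩)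

lemma le_iff_le_of_inducedRel_eq (hord : inducedRel K g = inducedRel K g') {s u : Finset V}
    (hs : s ∈ K.faces) (hu : u ∈ K.faces) : g s ≤ g u ↔ g' s ≤ g' u := by
  simpa only [not_lt] using (lt_iff_lt_of_inducedRel_eq hord hu hs).not

lemma IsFiltrationFn.of_inducedRel_eq (hg : IsFiltrationFn K g)
    (hord : inducedRel K g = inducedRel K g') : IsFiltrationFn K g' := by
  refine ⟨fun s hs u hu hsu => (le_iff_le_of_inducedRel_eq hord hs hu).1 (hg.1 s hs u hu hsu),
    fun s hs u hu heq => hg.2 s hs u hu ?_⟩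
  exact le_antisymm ((le_iff_le_of_inducedRel_eq hord hs hu).2 heq.le)
    ((le_iff_le_of_inducedRel_eq hord hu hs).2 heq.ge)

lemma sublevel_apply_eq_of_inducedRel_eq (hord : inducedRel K g = inducedRel K g')
    {Δ : Finset V} (hΔ : Δ ∈ K.faces) : sublevel K g (g Δ) = sublevel K g' (g' Δ) := by
  ext s
  simp only [sublevel, Finset.mem_filter]
  exact and_congr_right fun hs => le_iff_le_of_inducedRel_eq hord hs hΔ

lemma exists_sublevel_eq_of_lt_apply (hord : inducedRel K g = inducedRel K g')
    {Δ : Finset V} (hΔ : Δ ∈ K.faces) {q : ℝ} (hq : q < g' Δ) :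
    ∃ q' < g Δ, sublevel K g q' = sublevel K g' q := by
  rcases (sublevel K g' q).eq_empty_or_nonempty with hempty | hne
  · refine ⟨K.faces.inf' ⟨Δ, hΔ⟩ g - 1, by linarith [K.faces.inf'_le g hΔ], ?_⟩
    rw [hempty, Finset.eq_empty_iff_forall_notMem]
    intro s hs
    obtain ⟨hsK, hsq⟩ := Finset.mem_filter.1 hs
    linarith [K.faces.inf'_le g hsK]
  · -- the `g`-level of the last face of `K^{g'}_q` cuts out the same subcomplex
    obtain ⟨s₀, hs₀, hmax⟩ := (sublevel K g' q).exists_max_image g' hne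
    obtain ⟨hs₀K, hs₀q⟩ := Finset.mem_filter.1 hs₀
    refine ⟨g s₀, (lt_iff_lt_of_inducedRel_eq hord hs₀K hΔ).2 (hs₀q.trans_lt hq), ?_⟩
    ext s
    simp only [sublevel, Finset.mem_filter]
    refine and_congr_right fun hs => (le_iff_le_of_inducedRel_eq hord hs hs₀K).trans ?_
    exact ⟨fun h => h.trans hs₀q, fun h => hmax s (Finset.mem_filter.2 ⟨hs, h⟩)⟩

lemma eventually_inducedRel_add_smul_eq (hg : ∀ s ∈ K.faces, ∀ u ∈ K.faces, g s = g u → s = u)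
    (h : Finset V → ℝ) :
    ∀ᶠ l in 𝓝 (0 : ℝ), inducedRel K (fun s => g s + l * h s) = inducedRel K g := by
  have hpair (s u : Finset V) (hlt : g s < g u) :
      ∀ᶠ l in 𝓝 (0 : ℝ), g s + l * h s < g u + l * h u :=
    ContinuousAt.eventually_lt (by fun_prop) (by fun_prop) (by simpa using hlt)
  have hiff (s u : {s // s ∈ K.faces}) :
      ∀ᶠ l in 𝓝 (0 : ℝ), (g s + l * h s < g u + l * h u ↔ g s < g u) := by
    rcases lt_trichotomy (g s) (g u) with hlt | heq | hgt
    · filter_upwards [hpair s u hlt] with l hl using iff_of_true hl hlt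
    · obtain rfl : s = u := Subtype.ext (hg s s.2 u u.2 heq)
      exact Eventually.of_forall fun l => iff_of_false (lt_irrefl _) (lt_irrefl _)
    · filter_upwards [hpair u s hgt] with l hl using iff_of_false hl.asymm hgt.asymm
  filter_upwards [eventually_all.2 fun s => eventually_all.2 (hiff s)] with l hl
  funext s u
  exact propext (hl s u)

lemma exists_filtrationFn_inducedRel_eq_distLE_lt {f : Finset V → ℝ}
    (hg : IsFiltrationFn K g) {t : ℝ} (ht : 0 < t) (hd : DistLE K f g t) :
    ∃ (g' : Finset V → ℝ) (ε : ℝ), IsFiltrationFn K g' ∧ inducedRel K g = inducedRel K g' ∧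
      DistLE K f g' ε ∧ ε < t := by
  obtain ⟨l, hord, hl0, hl1⟩ :=
    (((eventually_inducedRel_add_smul_eq hg.2 (f - g)).filter_mono nhdsWithin_le_nhds).and
      (Ioo_mem_nhdsGT one_pos)).exists
  refine ⟨_, (1 - l) * t, hg.of_inducedRel_eq hord.symm, hord.symm, fun s hs => ?_,
    by nlinarith⟩
  calc |f s - (g s + l * (f - g) s)| = (1 - l) * |f s - g s| := by
        rw [← abs_of_pos (sub_pos.2 hl1), ← abs_mul]; congr 1; simp only [Pi.sub_apply]; ring
    _ ≤ (1 - l) * t := mul_le_mul_of_nonneg_left (hd s hs) (sub_pos.2 hl1).le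

end InducedOrder

lemma TerminalSimplex.of_inducedRel_eq {K : SComplex V} {g g' : Finset V → ℝ} {n : ℕ}
    {α : Finset V →₀ 𝔽} {Δ : Finset V}
    (h : TerminalSimplex 𝔽 K g n α Δ) (hord : inducedRel K g = inducedRel K g') :
    TerminalSimplex 𝔽 K g' n α Δ := by
  obtain ⟨hΔ, htriv, hnontriv⟩ := h
  refine ⟨hΔ, ?_, fun q hq => ?_⟩
  · rwa [TrivialIn, ← sublevel_apply_eq_of_inducedRel_eq hord hΔ]
  · obtain ⟨q', hq', heq⟩ := exists_sublevel_eq_of_lt_apply hord hΔ hq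
    rw [TrivialIn, ← heq]
    exact hnontriv q' hq'

section TermSet

variable {K : SComplex V} {f : Finset V → ℝ} {n : ℕ} {α : Finset V →₀ 𝔽}

lemma termSet_mono {ε ε' : ℝ} (hε : ε ≤ ε') : TermSet 𝔽 K f n α ε ⊆ TermSet 𝔽 K f n α ε' :=
  fun _ ⟨g, hg, hd, hΔ⟩ => ⟨g, hg, fun s hs => (hd s hs).trans hε, hΔ⟩

lemma termSet_subset_faces (ε : ℝ) : TermSet 𝔽 K f n α ε ⊆ ↑K.faces :=
  fun _ ⟨_, _, _, hΔ, _⟩ => hΔ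

lemma exists_lt_mem_termSet {t : ℝ} (ht : 0 < t) {Δ : Finset V}
    (hΔ : Δ ∈ TermSet 𝔽 K f n α t) : ∃ ε < t, Δ ∈ TermSet 𝔽 K f n α ε := by
  obtain ⟨g, hg, hd, hterm⟩ := hΔ
  obtain ⟨g', ε, hg', hord, hd', hε⟩ := exists_filtrationFn_inducedRel_eq_distLE_lt hg ht hd
  exact ⟨ε, hε, g', hg', hd', hterm.of_inducedRel_eq 𝔽 hord⟩

lemma eventually_termSet_superset {t : ℝ} (ht : 0 < t) :
    ∀ᶠ ε in 𝓝 t, TermSet 𝔽 K f n α t ⊆ TermSet 𝔽 K f n α ε := by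
  refine (((K.faces.finite_toSet.subset (termSet_subset_faces 𝔽 t))).eventually_all).2
    fun Δ hΔ => ?_
  obtain ⟨ε', hε', hΔ'⟩ := exists_lt_mem_termSet 𝔽 ht hΔ
  filter_upwards [Ioi_mem_nhds hε'] with ε hε using termSet_mono 𝔽 (le_of_lt hε) hΔ'

end TermSet

theorem stmt15_general {V : Type*} [LinearOrder V] (𝔽 : Type*) [Field 𝔽]
    (K : SComplex V) (f : Finset V → ℝ)
    (n : ℕ) (α : Finset V →₀ 𝔽) (a b : ℝ) :
    ∀ t : ℝ, 0 < t → t < (b - a) / 2 → ∃ δ > 0, ∀ ε : ℝ, 0 < ε → t - δ < ε → ε ≤ t →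
      TermSet 𝔽 K f n α ε = TermSet 𝔽 K f n α t := by
  intro t ht _
  obtain ⟨δ, hδ, hsub⟩ := Metric.eventually_nhds_iff.1
    (eventually_termSet_superset 𝔽 (K := K) (f := f) (n := n) (α := α) ht)
  refine ⟨δ, hδ, fun ε _ hlo hhi => (termSet_mono 𝔽 hhi).antisymm (hsub ?_)⟩
  rw [Real.dist_eq, abs_lt]
  constructor <;> linarith

/-- Lemma `LemmaUSC` for `Σ_ε`: `ε ↦ Σ_ε` is constant on a
half-open interval `(t - δ, t]` at each `t ∈ (0, (b-a)/2)`. -/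
theorem stmt15 {V : Type*} [LinearOrder V] (𝔽 : Type*) [Field 𝔽]
    (K : SComplex V) (f : Finset V → ℝ) (hf : IsFiltrationFn K f)
    (n : ℕ) (α : Finset V →₀ 𝔽) (a b : ℝ)
    (hborn : BornAt 𝔽 K f n α a) (hterm : TerminatesAt 𝔽 K f n α b) :
    ∀ t : ℝ, 0 < t → t < (b - a) / 2 → ∃ δ > 0, ∀ ε : ℝ, 0 < ε → t - δ < ε → ε ≤ t →
      TermSet 𝔽 K f n α ε = TermSet 𝔽 K f n α t :=
  stmt15_general 𝔽 K f n α a b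
end
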